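/- Fix integers n ≥ 1, m ≥ 1, m' ≥ 1, matrices Φ_f ∈ ℝ^{n×m} and Φ_g ∈ ℝ^{n×m'}, reals λ > 0, ν > 0, and a vector k* ∈ ℝᵐ. Define L := Φ_g(Φ_gᵀΦ_g + νI_{m'})⁻¹Φ_gᵀ, B := Φ_fᵀLΦ_f + λIₘ, A := B⁻¹Φ_fᵀL, C := Iₘ − AΦ_f, and ΔC := λν B⁻¹Φ_fᵀΦ_g((Φ_gᵀΦ_g + νI_{m'})⁻¹)²Φ_gᵀΦ_f B⁻¹. Let f₀ and ε be independent square-integrable random vectors in ℝᵐ and ℝⁿ respectively on some probability space, with f₀ having the standard Gaussian distribution N(0, Iₘ), E[ε] = 0 and E[εεᵀ] = λIₙ. Then E[(k*ᵀ(A(Φ_f f₀ + ε) − f₀))²] = k*ᵀC k* − k*ᵀΔC k*. -/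

import Mathlib

/-! Write the error as `(k ᵥ* -C) ⬝ᵥ f₀ + (k ᵥ* A) ⬝ᵥ ε`. Independence of `f₀` and `ε` and
`E f₀ = 0` kill the cross term, so with `E[f₀ f₀ᵀ] = I` and `E[ε εᵀ] = λI` the expected square is
`kᵀ(CCᵀ + λAAᵀ)k`. Since `C = 1 - B⁻¹ΦᵀLΦ = λB⁻¹`, this equals
`kᵀ(C - λB⁻¹Φᵀ(L - L²)ΦB⁻¹)k` for any symmetric `L`, and for the ridge hat matrix
`L = Ψ M⁻¹ Ψᵀ` with `M = ΨᵀΨ + νI` one has `L - L² = ν Ψ M⁻² Ψᵀ`. -/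

open Matrix MeasureTheory ProbabilityTheory
open scoped NNReal

lemma Matrix.PosSemidef.posDef_add_smul_one {ι : Type*} [Fintype ι] [DecidableEq ι]
    {S : Matrix ι ι ℝ} (hS : S.PosSemidef) {c : ℝ} (hc : 0 < c) : (S + c • 1).PosDef := by
  refine PosDef.posSemidef_add hS ?_
  rw [smul_one_eq_diagonal]
  exact posDef_diagonal_iff.2 fun _ => hc

lemma Matrix.PosSemidef.transpose_mul_mul_same {ι κ : Type*} [Fintype ι] [Fintype κ]
    {S : Matrix ι ι ℝ} (hS : S.PosSemidef) (Φ : Matrix ι κ ℝ) : (Φᵀ * S * Φ).PosSemidef := by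
  simpa only [conjTranspose_eq_transpose_of_trivial] using hS.conjTranspose_mul_mul_same Φ

lemma ridge_hat_posSemidef {ι κ : Type*} [Fintype ι] [Fintype κ] [DecidableEq κ]
    (Ψ : Matrix ι κ ℝ) {ν : ℝ} (hν : 0 < ν) :
    (Ψ * (Ψᵀ * Ψ + ν • 1)⁻¹ * Ψᵀ).PosSemidef := by
  have hM := ((posSemidef_conjTranspose_mul_self Ψ).posDef_add_smul_one hν).posSemidef.inv
  simpa only [conjTranspose_eq_transpose_of_trivial, transpose_transpose] using
    hM.transpose_mul_mul_same Ψᵀ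

lemma dotProduct_vecMul_self {R m n : Type*} [CommSemiring R] [Fintype m] [Fintype n]
    (v : m → R) (M : Matrix m n R) : (v ᵥ* M) ⬝ᵥ (v ᵥ* M) = v ⬝ᵥ ((M * Mᵀ) *ᵥ v) := by
  rw [← mulVec_mulVec, dotProduct_mulVec, mulVec_transpose]

section Ridge
variable {K : Type*} [Field K] {n m : Type*} [Fintype n] [Fintype m] [DecidableEq m]

lemma one_sub_inv_mul_eq_smul_inv {S : Matrix m m K} {c : K} (h : IsUnit (S + c • 1).det) :
    1 - (S + c • 1)⁻¹ * S = c • (S + c • 1)⁻¹ := by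
  calc 1 - (S + c • 1)⁻¹ * S = (S + c • 1)⁻¹ * (S + c • 1 - S) := by
        rw [Matrix.mul_sub, nonsing_inv_mul _ h]
    _ = c • (S + c • 1)⁻¹ := by rw [add_sub_cancel_left, Matrix.mul_smul, Matrix.mul_one]

lemma ridge_error_decomposition (Φ : Matrix n m K) {L : Matrix n n K} (hL : Lᵀ = L) {c : K}
    (hB : IsUnit (Φᵀ * L * Φ + c • 1).det) :
    let B := Φᵀ * L * Φ + c • 1
    let A := B⁻¹ * Φᵀ * L
    (1 - A * Φ) * (1 - A * Φ)ᵀ + c • (A * Aᵀ) =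
      (1 - A * Φ) - c • (B⁻¹ * Φᵀ * (L - L * L) * Φ * B⁻¹) := by
  intro B A
  have hBT : Bᵀ = B := by
    simp only [B, transpose_add, transpose_smul, transpose_one, transpose_mul, hL,
      transpose_transpose, Matrix.mul_assoc]
  have hC : 1 - A * Φ = c • B⁻¹ := by
    rw [show A * Φ = B⁻¹ * (Φᵀ * L * Φ) by simp only [A, Matrix.mul_assoc]]
    exact one_sub_inv_mul_eq_smul_inv hB
  have hAT : Aᵀ = L * Φ * B⁻¹ := by
    simp only [A, transpose_mul, transpose_nonsing_inv, hBT, hL, transpose_transpose,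
      Matrix.mul_assoc]
  have hBinv : c • B⁻¹ = c • (B⁻¹ * (Φᵀ * L * Φ) * B⁻¹) + (c * c) • (B⁻¹ * B⁻¹) := by
    calc c • B⁻¹ = c • (B⁻¹ * B * B⁻¹) := by rw [nonsing_inv_mul _ hB, Matrix.one_mul]
      _ = _ := by simp only [B, Matrix.mul_add, Matrix.add_mul, Matrix.mul_smul, Matrix.smul_mul,
          Matrix.mul_one, smul_add, smul_smul]
  rw [hC, transpose_smul, transpose_nonsing_inv, hBT, hAT]
  conv_rhs => rw [hBinv]
  simp only [A, Matrix.mul_sub, Matrix.sub_mul, Matrix.smul_mul, Matrix.mul_smul,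
    smul_sub, smul_smul, Matrix.mul_assoc]
  abel

lemma ridge_hat_sub_mul_self {p : Type*} [Fintype p] [DecidableEq p]
    (Ψ : Matrix n p K) {ν : K} (hM : IsUnit (Ψᵀ * Ψ + ν • 1).det) :
    let L := Ψ * (Ψᵀ * Ψ + ν • 1)⁻¹ * Ψᵀ
    L - L * L = ν • (Ψ * (Ψᵀ * Ψ + ν • 1)⁻¹ ^ 2 * Ψᵀ) := by
  dsimp only
  set M := Ψᵀ * Ψ + ν • (1 : Matrix p p K)
  have hΨ : Ψᵀ * Ψ = M - ν • 1 := by simp [M]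
  calc _ = Ψ * M⁻¹ * Ψᵀ - Ψ * M⁻¹ * (Ψᵀ * Ψ) * M⁻¹ * Ψᵀ := by
        simp only [Matrix.mul_assoc]
    _ = _ := by
        rw [hΨ, Matrix.mul_sub, Matrix.sub_mul, Matrix.sub_mul, Matrix.mul_assoc _ M,
          mul_nonsing_inv _ hM, Matrix.mul_smul, Matrix.smul_mul, Matrix.smul_mul, sq]
        simp only [Matrix.mul_one, Matrix.mul_assoc]
        abel

end Ridge

section SecondMoment
variable {Ω ι κ : Type*} [Fintype ι] [Fintype κ] {mΩ : MeasurableSpace Ω} {μ : Measure Ω}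

noncomputable def secondMoment (X : Ω → ι → ℝ) (μ : Measure Ω) : Matrix ι ι ℝ :=
  Matrix.of fun i j => ∫ ω, X ω i * X ω j ∂μ

lemma integrable_dotProduct {X : Ω → ι → ℝ} (hX : ∀ i, Integrable (fun ω => X ω i) μ)
    (c : ι → ℝ) : Integrable (fun ω => c ⬝ᵥ X ω) μ :=
  integrable_finsetSum _ fun i _ => (hX i).const_mul (c i)

lemma integral_dotProduct {X : Ω → ι → ℝ} (hX : ∀ i, Integrable (fun ω => X ω i) μ)
    (c : ι → ℝ) : ∫ ω, c ⬝ᵥ X ω ∂μ = c ⬝ᵥ fun i => ∫ ω, X ω i ∂μ := by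
  simp only [dotProduct]
  rw [integral_finsetSum _ fun i _ => (hX i).const_mul (c i)]
  simp only [integral_const_mul]

lemma sq_dotProduct (c x : ι → ℝ) : (c ⬝ᵥ x) ^ 2 = ∑ i, ∑ j, c i * c j * (x i * x j) := by
  simp only [dotProduct, sq, Finset.sum_mul_sum]
  refine Finset.sum_congr rfl fun i _ => Finset.sum_congr rfl fun j _ => by ring

lemma integrable_sq_dotProduct {X : Ω → ι → ℝ}
    (hX : ∀ i j, Integrable (fun ω => X ω i * X ω j) μ) (c : ι → ℝ) :
    Integrable (fun ω => (c ⬝ᵥ X ω) ^ 2) μ := by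
  simp only [sq_dotProduct]
  exact integrable_finsetSum _ fun i _ => integrable_finsetSum _ fun j _ =>
    (hX i j).const_mul _

lemma integral_sq_dotProduct {X : Ω → ι → ℝ}
    (hX : ∀ i j, Integrable (fun ω => X ω i * X ω j) μ) (c : ι → ℝ) :
    ∫ ω, (c ⬝ᵥ X ω) ^ 2 ∂μ = c ⬝ᵥ (secondMoment X μ *ᵥ c) := by
  simp only [sq_dotProduct]
  rw [integral_finsetSum _ fun i _ => integrable_finsetSum _ fun j _ => (hX i j).const_mul _]
  simp only [dotProduct, mulVec, Finset.mul_sum, secondMoment, of_apply]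
  refine Finset.sum_congr rfl fun i _ => ?_
  rw [integral_finsetSum _ fun j _ => (hX i j).const_mul _]
  refine Finset.sum_congr rfl fun j _ => ?_
  rw [integral_const_mul]
  ring

lemma integral_sq_dotProduct_add_of_indepFun {X : Ω → ι → ℝ} {Y : Ω → κ → ℝ}
    (hXY : IndepFun X Y μ) (hX : ∀ i, Integrable (fun ω => X ω i) μ)
    (hY : ∀ i, Integrable (fun ω => Y ω i) μ)
    (hX₂ : ∀ i j, Integrable (fun ω => X ω i * X ω j) μ)
    (hY₂ : ∀ i j, Integrable (fun ω => Y ω i * Y ω j) μ)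
    (hX₀ : ∀ i, ∫ ω, X ω i ∂μ = 0) (a : ι → ℝ) (b : κ → ℝ) :
    ∫ ω, (a ⬝ᵥ X ω + b ⬝ᵥ Y ω) ^ 2 ∂μ =
      a ⬝ᵥ (secondMoment X μ *ᵥ a) + b ⬝ᵥ (secondMoment Y μ *ᵥ b) := by
  have hindep : IndepFun (fun ω => a ⬝ᵥ X ω) (fun ω => b ⬝ᵥ Y ω) μ :=
    hXY.comp (φ := (a ⬝ᵥ ·)) (ψ := (b ⬝ᵥ ·)) (by simp only [dotProduct]; fun_prop)
      (by simp only [dotProduct]; fun_prop)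
  have hcross : Integrable (fun ω => 2 * ((a ⬝ᵥ X ω) * (b ⬝ᵥ Y ω))) μ :=
    (hindep.integrable_mul (integrable_dotProduct hX a) (integrable_dotProduct hY b)).const_mul 2
  have hcross₀ : ∫ ω, (a ⬝ᵥ X ω) * (b ⬝ᵥ Y ω) ∂μ = 0 := by
    rw [← Pi.mul_def, hindep.integral_mul_eq_mul_integral
      (integrable_dotProduct hX a).aestronglyMeasurable
      (integrable_dotProduct hY b).aestronglyMeasurable, integral_dotProduct hX]
    simp [hX₀]
  calc ∫ ω, (a ⬝ᵥ X ω + b ⬝ᵥ Y ω) ^ 2 ∂μ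
      = ∫ ω, (a ⬝ᵥ X ω) ^ 2 ∂μ + ∫ ω, (b ⬝ᵥ Y ω) ^ 2 ∂μ
          + ∫ ω, 2 * ((a ⬝ᵥ X ω) * (b ⬝ᵥ Y ω)) ∂μ := by
        have hX2 := integrable_sq_dotProduct hX₂ a
        have hY2 := integrable_sq_dotProduct hY₂ b
        simp_rw [add_sq', mul_assoc]
        rw [integral_add (hX2.fun_add hY2) hcross, integral_add hX2 hY2]
    _ = _ := by
        rw [integral_const_mul, hcross₀, mul_zero, add_zero, integral_sq_dotProduct hX₂,
          integral_sq_dotProduct hY₂]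

end SecondMoment

section ProductLaw
variable {Ω ι : Type*} [Fintype ι] {mΩ : MeasurableSpace Ω} {μ : Measure Ω} {X : Ω → ι → ℝ}

lemma measurePreserving_eval_comp_of_map_eq_pi {ν : ι → Measure ℝ}
    [∀ i, IsProbabilityMeasure (ν i)] (hX : Measurable X) (hlaw : μ.map X = Measure.pi ν)
    (i : ι) : MeasurePreserving (fun ω => X ω i) μ (ν i) :=
  (measurePreserving_eval ν i).comp ⟨hX, hlaw⟩

lemma iIndepFun_eval_comp_of_map_eq_pi [IsProbabilityMeasure μ] {ν : ι → Measure ℝ}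
    [∀ i, IsProbabilityMeasure (ν i)] (hX : Measurable X) (hlaw : μ.map X = Measure.pi ν) :
    iIndepFun (fun i ω => X ω i) μ := by
  rw [iIndepFun_iff_map_fun_eq_pi_map fun i => (hX.eval (a := i)).aemeasurable]
  simpa only [(measurePreserving_eval_comp_of_map_eq_pi hX hlaw _).map_eq] using hlaw

variable {v : ℝ≥0}

lemma memLp_eval_of_map_eq_pi_gaussianReal (hX : Measurable X)
    (hlaw : μ.map X = Measure.pi fun _ => gaussianReal 0 v) (i : ι) :
    MemLp (fun ω => X ω i) 2 μ :=
  (memLp_id_gaussianReal 2).comp_measurePreserving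
    (measurePreserving_eval_comp_of_map_eq_pi hX hlaw i)

lemma integral_eval_of_map_eq_pi_gaussianReal (hX : Measurable X)
    (hlaw : μ.map X = Measure.pi fun _ => gaussianReal 0 v) (i : ι) : ∫ ω, X ω i ∂μ = 0 := by
  have h := measurePreserving_eval_comp_of_map_eq_pi hX hlaw i
  rw [← integral_id_gaussianReal (μ := 0) (v := v), ← h.map_eq]
  exact (integral_map h.measurable.aemeasurable aestronglyMeasurable_id).symm

lemma integrable_eval_mul_eval_of_map_eq_pi_gaussianReal (hX : Measurable X)
    (hlaw : μ.map X = Measure.pi fun _ => gaussianReal 0 v) (i j : ι) :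
    Integrable (fun ω => X ω i * X ω j) μ :=
  (memLp_eval_of_map_eq_pi_gaussianReal hX hlaw i).integrable_mul
    (memLp_eval_of_map_eq_pi_gaussianReal hX hlaw j)

lemma secondMoment_of_map_eq_pi_gaussianReal [DecidableEq ι] [IsProbabilityMeasure μ]
    (hX : Measurable X) (hlaw : μ.map X = Measure.pi fun _ => gaussianReal 0 v) :
    secondMoment X μ = (v : ℝ) • 1 := by
  ext i j
  simp only [secondMoment, of_apply, Matrix.smul_apply, one_apply, smul_eq_mul]
  split_ifs with hij
  · subst hij
    have h := measurePreserving_eval_comp_of_map_eq_pi hX hlaw i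
    rw [mul_one, ← variance_id_gaussianReal (μ := 0) (v := v),
      variance_of_integral_eq_zero aemeasurable_id integral_id_gaussianReal, ← h.map_eq,
      integral_map h.measurable.aemeasurable (by fun_prop)]
    simp only [id, sq]
  · rw [mul_zero, ← Pi.mul_def,
      ((iIndepFun_eval_comp_of_map_eq_pi hX hlaw).indepFun hij).integral_mul_eq_mul_integral
        (memLp_eval_of_map_eq_pi_gaussianReal hX hlaw i).aestronglyMeasurable
        (memLp_eval_of_map_eq_pi_gaussianReal hX hlaw j).aestronglyMeasurable,
      integral_eval_of_map_eq_pi_gaussianReal hX hlaw, zero_mul]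

end ProductLaw

theorem stmt10_general (n m m' : ℕ)
    (Φf : Matrix (Fin n) (Fin m) ℝ) (Φg : Matrix (Fin n) (Fin m') ℝ)
    (lam ν : ℝ) (hlam : 0 < lam) (hν : 0 < ν) (ks : Fin m → ℝ)
    {Ω : Type*} [MeasureSpace Ω] [IsProbabilityMeasure (volume : Measure Ω)]
    (f₀ : Ω → (Fin m → ℝ)) (ε : Ω → (Fin n → ℝ))
    (hmeasf : Measurable f₀)
    (hlaw : Measure.map f₀ volume = Measure.pi fun _ : Fin m => gaussianReal 0 1)
    (hindep : IndepFun f₀ ε)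
    (hint1 : ∀ i, Integrable fun ω => ε ω i)
    (hint2 : ∀ i j, Integrable fun ω => ε ω i * ε ω j)
    (hcov : ∀ i j, ∫ ω, ε ω i * ε ω j = lam * (if i = j then 1 else 0)) :
    let L : Matrix (Fin n) (Fin n) ℝ :=
      Φg * (Φgᵀ * Φg + ν • (1 : Matrix (Fin m') (Fin m') ℝ))⁻¹ * Φgᵀ
    let B : Matrix (Fin m) (Fin m) ℝ := Φfᵀ * L * Φf + lam • (1 : Matrix (Fin m) (Fin m) ℝ)
    let A : Matrix (Fin m) (Fin n) ℝ := B⁻¹ * Φfᵀ * L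
    let C : Matrix (Fin m) (Fin m) ℝ := (1 : Matrix (Fin m) (Fin m) ℝ) - A * Φf
    let ΔC : Matrix (Fin m) (Fin m) ℝ := (lam * ν) •
      (B⁻¹ * Φfᵀ * Φg * ((Φgᵀ * Φg + ν • (1 : Matrix (Fin m') (Fin m') ℝ))⁻¹ ^ 2)
        * Φgᵀ * Φf * B⁻¹)
    ∫ ω, (ks ⬝ᵥ (A *ᵥ (Φf *ᵥ f₀ ω + ε ω) - f₀ ω)) ^ 2 =
      ks ⬝ᵥ (C *ᵥ ks) - ks ⬝ᵥ (ΔC *ᵥ ks) := by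
  intro L B A C ΔC
  have hM := (posSemidef_conjTranspose_mul_self Φg).posDef_add_smul_one hν
  have hL : L.PosSemidef := ridge_hat_posSemidef Φg hν
  have hB : B.PosDef := (hL.transpose_mul_mul_same Φf).posDef_add_smul_one hlam
  have hLT : Lᵀ = L := by simpa only [conjTranspose_eq_transpose_of_trivial] using hL.1.eq
  have hkey : C * Cᵀ + lam • (A * Aᵀ) = C - ΔC := by
    have hridge : C * Cᵀ + lam • (A * Aᵀ) =
        C - lam • (B⁻¹ * Φfᵀ * (L - L * L) * Φf * B⁻¹) :=
      ridge_error_decomposition Φf hLT hB.det_pos.ne'.isUnit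
    have hL2 : L - L * L = ν • (Φg * (Φgᵀ * Φg + ν • 1)⁻¹ ^ 2 * Φgᵀ) :=
      ridge_hat_sub_mul_self Φg hM.det_pos.ne'.isUnit
    rw [hridge, hL2]
    simp only [ΔC, Matrix.mul_smul, Matrix.smul_mul, smul_smul, Matrix.mul_assoc]
  have hrep : ∀ ω, ks ⬝ᵥ (A *ᵥ (Φf *ᵥ f₀ ω + ε ω) - f₀ ω) =
      (ks ᵥ* -C) ⬝ᵥ f₀ ω + (ks ᵥ* A) ⬝ᵥ ε ω := fun ω => by
    rw [← dotProduct_mulVec, ← dotProduct_mulVec, ← dotProduct_add, neg_mulVec, sub_mulVec,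
      one_mulVec, mulVec_add, mulVec_mulVec]
    abel_nf
  have hε : secondMoment ε volume = lam • 1 := by
    ext i j
    simp only [secondMoment, of_apply, hcov, Matrix.smul_apply, one_apply, smul_eq_mul]
  simp only [hrep]
  rw [integral_sq_dotProduct_add_of_indepFun hindep
    (fun i => (memLp_eval_of_map_eq_pi_gaussianReal hmeasf hlaw i).integrable one_le_two) hint1
    (integrable_eval_mul_eval_of_map_eq_pi_gaussianReal hmeasf hlaw) hint2
    (integral_eval_of_map_eq_pi_gaussianReal hmeasf hlaw),
    secondMoment_of_map_eq_pi_gaussianReal hmeasf hlaw, hε]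
  simp only [NNReal.coe_one, one_smul, one_mulVec, smul_mulVec, dotProduct_smul,
    dotProduct_vecMul_self, transpose_neg, neg_mul_neg, smul_eq_mul]
  rw [← dotProduct_sub, ← sub_mulVec, ← hkey, add_mulVec, dotProduct_add, smul_mulVec,
    dotProduct_smul, smul_eq_mul]

/-- Average-case error representation of the quasi-Bayesian dual IV posterior covariance:
if `f₀ ~ N(0, Iₘ)` (structural coefficients drawn from the standard Gaussian prior) is
independent of the noise `ε` with `E[ε] = 0` and `E[εεᵀ] = λIₙ`, then
`E[(k*ᵀ(A(Φ_f f₀ + ε) − f₀))²] = k*ᵀCk* − k*ᵀΔCk*`. -/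
theorem stmt10 (n m m' : ℕ) (hn : 0 < n) (hm : 0 < m) (hm' : 0 < m')
    (Φf : Matrix (Fin n) (Fin m) ℝ) (Φg : Matrix (Fin n) (Fin m') ℝ)
    (lam ν : ℝ) (hlam : 0 < lam) (hν : 0 < ν) (ks : Fin m → ℝ)
    {Ω : Type*} [MeasureSpace Ω] [IsProbabilityMeasure (volume : Measure Ω)]
    (f₀ : Ω → (Fin m → ℝ)) (ε : Ω → (Fin n → ℝ))
    (hmeasf : Measurable f₀) (hmeas : Measurable ε)
    (hlaw : Measure.map f₀ volume = Measure.pi fun _ : Fin m => gaussianReal 0 1)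
    (hindep : IndepFun f₀ ε)
    (hint1 : ∀ i, Integrable fun ω => ε ω i)
    (hint2 : ∀ i j, Integrable fun ω => ε ω i * ε ω j)
    (hmean : ∀ i, ∫ ω, ε ω i = 0)
    (hcov : ∀ i j, ∫ ω, ε ω i * ε ω j = lam * (if i = j then 1 else 0)) :
    let L : Matrix (Fin n) (Fin n) ℝ :=
      Φg * (Φgᵀ * Φg + ν • (1 : Matrix (Fin m') (Fin m') ℝ))⁻¹ * Φgᵀ
    let B : Matrix (Fin m) (Fin m) ℝ := Φfᵀ * L * Φf + lam • (1 : Matrix (Fin m) (Fin m) ℝ)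
    let A : Matrix (Fin m) (Fin n) ℝ := B⁻¹ * Φfᵀ * L
    let C : Matrix (Fin m) (Fin m) ℝ := (1 : Matrix (Fin m) (Fin m) ℝ) - A * Φf
    let ΔC : Matrix (Fin m) (Fin m) ℝ := (lam * ν) •
      (B⁻¹ * Φfᵀ * Φg * ((Φgᵀ * Φg + ν • (1 : Matrix (Fin m') (Fin m') ℝ))⁻¹ ^ 2)
        * Φgᵀ * Φf * B⁻¹)
    ∫ ω, (ks ⬝ᵥ (A *ᵥ (Φf *ᵥ f₀ ω + ε ω) - f₀ ω)) ^ 2 =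
      ks ⬝ᵥ (C *ᵥ ks) - ks ⬝ᵥ (ΔC *ᵥ ks) :=
  stmt10_general n m m' Φf Φg lam ν hlam hν ks f₀ ε hmeasf hlaw hindep hint1 hint2 hcov
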